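/- A small category C is Cauchy complete (every idempotent splits) if and only if the externally tiny objects of Psh(C) are exactly the representable presheaves. -/

import Mathlib

/-!
Every presheaf `X` is a colimit of representables; if `Hom(X, -)` preserves that colimit, `𝟙 X`
factors through one of its legs, so `X` is a retract of a representable. Conversely a retract of
a colimit-preserving functor preserves colimits, and `Hom(yA, -)` is evaluation at `A`. Hence the
tiny presheaves are exactly the retracts of representables, and since the Yoneda embedding is
fully faithful into an idempotent complete category, its essential image is closed under retracts
iff idempotents split in `C`.
-/

open CategoryTheory Limits Opposite

universe u w w' v₁ v₂ u₁ u₂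

namespace CategoryTheory

section Retract

variable {D : Type u₁} [Category.{v₁} D] {E : Type u₂} [Category.{v₂} E] {G H : D ⥤ E}

lemma Retract.app_retract (h : Retract H G) (X : D) : h.i.app X ≫ h.r.app X = 𝟙 (H.obj X) := by
  rw [← NatTrans.comp_app, h.retract, NatTrans.id_app]

noncomputable def Retract.isColimitMapCocone (h : Retract H G) {J : Type*} [Category J]
    {F : J ⥤ D} {c : Cocone F} (hc : IsColimit (G.mapCocone c)) : IsColimit (H.mapCocone c) where
  desc s := h.i.app c.pt ≫ hc.desc ((Cocone.precompose (Functor.whiskerLeft F h.r)).obj s)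
  fac s j := by
    have := hc.fac ((Cocone.precompose (Functor.whiskerLeft F h.r)).obj s) j
    dsimp at this ⊢
    rw [h.i.naturality_assoc, this, reassoc_of% (h.app_retract _)]
  uniq s m hm := by
    have : h.r.app c.pt ≫ m = hc.desc ((Cocone.precompose (Functor.whiskerLeft F h.r)).obj s) :=
      hc.uniq ((Cocone.precompose (Functor.whiskerLeft F h.r)).obj s) _ fun j => by
        dsimp
        rw [h.r.naturality_assoc, ← hm j]
        rfl
    rw [← this, reassoc_of% (h.app_retract _)]

lemma Retract.preservesColimitsOfSize (h : Retract H G) [PreservesColimitsOfSize.{w, w'} G] :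
    PreservesColimitsOfSize.{w, w'} H where
  preservesColimitsOfShape :=
    { preservesColimit :=
        { preserves := fun hc => ⟨h.isColimitMapCocone (isColimitOfPreserves G hc)⟩ } }

lemma Limits.IsColimit.exists_retract_of_preservesColimit {J : Type v₁} [Category J]
    {F : J ⥤ D} {c : Cocone F} (hc : IsColimit c)
    [hF : PreservesColimit F (coyoneda.obj (Opposite.op c.pt))] :
    ∃ j, Nonempty (Retract c.pt (F.obj j)) := by
  obtain ⟨j, s, hs⟩ := Types.jointly_surjective _
    (isColimitOfPreserves (coyoneda.obj (Opposite.op c.pt)) hc) (𝟙 c.pt)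
  exact ⟨j, ⟨{ i := s, r := c.ι.app j, retract := hs }⟩⟩

end Retract

lemma isIdempotentComplete_of_hasEqualizers (D : Type u₁) [Category.{v₁} D] [HasEqualizers D] :
    IsIdempotentComplete D :=
  (Idempotents.isIdempotentComplete_iff_hasEqualizer_of_id_and_idempotent D).2
    fun _ _ _ => inferInstance

namespace Functor.FullyFaithful

variable {C : Type u₁} [Category.{v₁} C] {D : Type u₂} [Category.{v₂} D] {F : C ⥤ D}

lemma essImage_of_retract (hF : F.FullyFaithful) [IsIdempotentComplete C] {X : D} {A : C}
    (h : Retract X (F.obj A)) : F.essImage X := by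
  obtain ⟨B, i, e, hie, hei⟩ := IsIdempotentComplete.idempotents_split A
    (hF.preimage (h.r ≫ h.i)) (hF.map_injective (by simp))
  have hFei : F.map e ≫ F.map i = h.r ≫ h.i := by rw [← F.map_comp, hei, hF.map_preimage]
  refine ⟨B, ⟨⟨F.map i ≫ h.r, h.i ≫ F.map e, ?_, ?_⟩⟩⟩
  · rw [Category.assoc, ← Category.assoc h.r, ← hFei]
    simp only [Category.assoc, ← F.map_comp, reassoc_of% hie, hie, F.map_id]
  · rw [Category.assoc, ← Category.assoc (F.map e), hFei]
    simp

lemma isIdempotentComplete_of_essImage_retract (hF : F.FullyFaithful) [IsIdempotentComplete D]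
    (h : ∀ (X : D) (A : C), Retract X (F.obj A) → F.essImage X) : IsIdempotentComplete C := by
  refine ⟨fun A p hp => ?_⟩
  obtain ⟨Y, i, e, hie, hei⟩ :=
    IsIdempotentComplete.idempotents_split (F.obj A) (F.map p) (by rw [← F.map_comp, hp])
  obtain ⟨B, ⟨φ⟩⟩ := h Y A ⟨i, e, hie⟩
  refine ⟨B, hF.preimage (φ.hom ≫ i), hF.preimage (e ≫ φ.inv), ?_, ?_⟩
  · apply hF.map_injective
    simp [reassoc_of% hie]
  · apply hF.map_injective
    simp [hei]

end Functor.FullyFaithful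

lemma Functor.isRepresentable_iff_mem_essImage {C : Type u₁} [Category.{v₁} C]
    (X : Cᵒᵖ ⥤ Type v₁) : X.IsRepresentable ↔ yoneda.essImage X :=
  ⟨fun _ => ⟨X.reprX, ⟨X.reprW⟩⟩, fun ⟨_, ⟨e⟩⟩ => Functor.IsRepresentable.mk' e⟩

section Presheaf

variable {C : Type u} [SmallCategory C]

lemma preservesColimits_coyoneda_obj_yoneda_obj (A : C) :
    PreservesColimits (coyoneda.obj (op (yoneda.obj A))) :=
  preservesColimits_of_natIso (curriedYonedaLemma.app (op A)).symm

lemma nonempty_preservesColimits_coyoneda_obj_iff_exists_retract (X : Cᵒᵖ ⥤ Type u) :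
    Nonempty (PreservesColimits (coyoneda.obj (op X))) ↔
      ∃ A : C, Nonempty (Retract X (yoneda.obj A)) := by
  constructor
  · rintro ⟨_⟩
    -- the point of `coconeOfRepresentable X` is `X` only after unfolding
    obtain ⟨j, ⟨h⟩⟩ :=
      (Presheaf.colimitOfRepresentable X).exists_retract_of_preservesColimit (hF :=
        inferInstanceAs (PreservesColimit _ (coyoneda.obj (op X))))
    exact ⟨_, ⟨h.trans (Retract.ofIso (uliftYonedaIsoYoneda.app _))⟩⟩
  · rintro ⟨A, ⟨h⟩⟩
    have := preservesColimits_coyoneda_obj_yoneda_obj A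
    exact ⟨(h.op.map coyoneda).preservesColimitsOfSize⟩

end Presheaf

end CategoryTheory

/-- A small category `C` is Cauchy complete (every idempotent splits) if and only if the
externally tiny objects of `Psh(C)` (presheaves `X` such that `Hom(X, -)` preserves all colimits)
are exactly the representable presheaves. -/
theorem isIdempotentComplete_iff_tiny_eq_representable (C : Type u) [SmallCategory C] :
    IsIdempotentComplete C ↔
      ∀ X : Cᵒᵖ ⥤ Type u,
        (Nonempty (PreservesColimits (coyoneda.obj (op X))) ↔ X.IsRepresentable) := by
  simp only [nonempty_preservesColimits_coyoneda_obj_iff_exists_retract,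
    Functor.isRepresentable_iff_mem_essImage]
  constructor
  · intro _ X
    constructor
    · rintro ⟨A, ⟨h⟩⟩
      exact Yoneda.fullyFaithful.essImage_of_retract h
    · rintro ⟨A, ⟨e⟩⟩
      exact ⟨A, ⟨Retract.ofIso e.symm⟩⟩
  · intro h
    have := isIdempotentComplete_of_hasEqualizers (Cᵒᵖ ⥤ Type u)
    exact Yoneda.fullyFaithful.isIdempotentComplete_of_essImage_retract
      fun X A r => (h X).1 ⟨A, ⟨r⟩⟩
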